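/- arXiv:0909.3416 — 3 statements merged into one kernel-verified Lean document; each statement's English description precedes it below -/
import Mathlib

section
/- Let λ ∈ (−1,0) and n, l, k ∈ ℕ. Then ∫_0^∞ K^λ_{n,n+k}(r)·K^{1/λ}_{l,l+k}(r)·r dr = 1/2 if n = l, and = 0 if n ≠ l. -/
/-!
Multiplying out the two finite sums, the integrand becomes a combination of the Gaussian moments
`r ^ (2m+1) e^{-c r²}` with `c = (1 - λ) + (1 - 1/λ) = (1 - λ)(1 - 1/λ) > 0`, whose integrals
over `(0, ∞)` are `m! / (2 c^(m+1))`. Since `1 - 1/λ = -(1 - λ)/λ`, every power of `1 - λ`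
cancels and the `(u, v)` term becomes
`λ^(n-l)/2 · (-1)^(u+v) C(n+k, n-u) C(l+k, l-v) (u+v+k)!/(u! v!)`, up to the two normalising
square roots. Summing over `v` first, Chu–Vandermonde with a negative upper index gives
`∑_v (-1)^v C(l+k, l-v) (u+v+k)!/v! = (-1)^l (u+k)! C(u, l)`, which vanishes for `u < l`. Hence
the double sum is `(n+k)!/n!` if `n = l` and `0` otherwise (for `n > l`, sum over `u` first).
-/

open MeasureTheory Filter

/-- The function `K^λ_{n,n+k}(r) = √(n!/(n+k)!) (1−λ)^{k+1} e^{−(1−λ)r²} r^k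
·∑_{u=0}^n (λ^{n−u}/u!) C(n+k, n−u) (1−λ)^{2u} r^{2u}`. -/
noncomputable def Kfun (lam : ℂ) (n k : ℕ) (r : ℝ) : ℂ :=
  ((Real.sqrt ((n.factorial : ℝ) / ((n + k).factorial : ℝ)) : ℝ) : ℂ) * (1 - lam) ^ (k + 1) *
    Complex.exp (-(1 - lam) * (r : ℂ) ^ 2) * (r : ℂ) ^ k *
    ∑ u ∈ Finset.range (n + 1),
      (lam ^ (n - u) / (u.factorial : ℂ)) * (((n + k).choose (n - u) : ℕ) : ℂ) *
        (1 - lam) ^ (2 * u) * (r : ℂ) ^ (2 * u)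

open Finset Nat

theorem Ring.choose_natCast_sub_natCast_sub_one (u l : ℕ) :
    Ring.choose ((l : ℤ) - u - 1) l = (-1) ^ l * u.choose l := by
  rcases le_or_gt l u with hlu | hul
  · rw [show (l : ℤ) - u - 1 = -((u - l + 1 : ℕ) : ℤ) by push_cast [hlu]; ring, Ring.choose_neg,
      Units.smul_def, Int.coe_negOnePow_natCast,
      show ((u - l + 1 : ℕ) : ℤ) + l - 1 = u by push_cast [hlu]; ring, Ring.choose_natCast,
      smul_eq_mul]
  · rw [show (l : ℤ) - u - 1 = ((l - u - 1 : ℕ) : ℤ) by omega, Ring.choose_natCast,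
      Nat.choose_eq_zero_of_lt (by omega), Nat.choose_eq_zero_of_lt hul]
    simp

theorem Int.alternating_sum_choose_mul_add_choose (u l k : ℕ) :
    ∑ v ∈ Finset.range (l + 1), (-1 : ℤ) ^ v * (l + k).choose (l - v) * (u + k + v).choose v =
      (-1) ^ l * u.choose l := by
  -- Chu–Vandermonde for `C(-(u+k+1) + (l+k), l)`, where `C(-(u+k+1), v) = (-1)^v C(u+k+v, v)`.
  have hneg (v : ℕ) :
      Ring.choose (-((u + k + 1 : ℕ) : ℤ)) v = (-1) ^ v * (u + k + v).choose v := by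
    rw [Ring.choose_neg, Units.smul_def, Int.coe_negOnePow_natCast,
      show ((u + k + 1 : ℕ) : ℤ) + v - 1 = ((u + k + v : ℕ) : ℤ) by push_cast; ring,
      Ring.choose_natCast, smul_eq_mul]
  have hvdm := Ring.add_choose_eq l (Commute.all (-((u + k + 1 : ℕ) : ℤ)) ((l + k : ℕ) : ℤ))
  rw [Finset.Nat.sum_antidiagonal_eq_sum_range_succ
    (fun i j => Ring.choose (-((u + k + 1 : ℕ) : ℤ)) i * Ring.choose ((l + k : ℕ) : ℤ) j)] at hvdm
  rw [← Ring.choose_natCast_sub_natCast_sub_one,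
    show (l : ℤ) - u - 1 = -((u + k + 1 : ℕ) : ℤ) + ((l + k : ℕ) : ℤ) by push_cast; ring, hvdm]
  refine Finset.sum_congr rfl fun v _ => ?_
  rw [hneg, Ring.choose_natCast]
  ring

section DoubleSum

variable {F : Type*} [Field F] [CharZero F]

theorem sum_neg_one_pow_mul_choose_mul_factorial_div (u l k : ℕ) :
    ∑ v ∈ range (l + 1), (-1 : F) ^ v * (l + k).choose (l - v) * ((u + v + k)! / v !) =
      (-1) ^ l * (u + k)! * u.choose l := by
  have h := congrArg (fun z : ℤ => ((u + k)! * z : F))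
    (Int.alternating_sum_choose_mul_add_choose u l k)
  push_cast at h
  rw [mul_assoc, mul_left_comm, ← h, Finset.mul_sum]
  refine Finset.sum_congr rfl fun v _ => ?_
  rw [show u + v + k = u + k + v by ring, ← Nat.add_choose_mul_factorial_mul_factorial (u + k) v]
  have : (v ! : F) ≠ 0 := Nat.cast_ne_zero.mpr v.factorial_ne_zero
  push_cast
  field_simp

theorem sum_sum_neg_one_pow_mul_choose_mul_factorial_of_le {n l : ℕ} (k : ℕ) (hnl : n ≤ l) :
    ∑ u ∈ range (n + 1), ∑ v ∈ range (l + 1),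
        (-1 : F) ^ (u + v) * (n + k).choose (n - u) * (l + k).choose (l - v) *
          ((u + v + k)! / (u ! * v !)) =
      if n = l then ((n + k)! / n ! : F) else 0 := by
  have inner (u : ℕ) : ∑ v ∈ range (l + 1),
        (-1 : F) ^ (u + v) * (n + k).choose (n - u) * (l + k).choose (l - v) *
          ((u + v + k)! / (u ! * v !)) =
      (-1) ^ (u + l) * (n + k).choose (n - u) * ((u + k)! / u !) * u.choose l := by
    calc _ = (-1) ^ u * (n + k).choose (n - u) / u ! *
          ∑ v ∈ range (l + 1), (-1 : F) ^ v * (l + k).choose (l - v) * ((u + v + k)! / v !) := by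
          rw [Finset.mul_sum]
          exact Finset.sum_congr rfl fun v _ => by ring
      _ = _ := by rw [sum_neg_one_pow_mul_choose_mul_factorial_div]; ring
  simp only [inner]
  split_ifs with h
  · subst h
    rw [Finset.sum_range_succ, Finset.sum_eq_zero fun u hu => by
      rw [Nat.choose_eq_zero_of_lt (n := u) (Finset.mem_range.mp hu)]; simp]
    simp [← two_mul, pow_mul]
  · exact Finset.sum_eq_zero fun u hu => by
      rw [Nat.choose_eq_zero_of_lt (n := u) (by have := Finset.mem_range.mp hu; omega)]; simp

theorem sum_sum_neg_one_pow_mul_choose_mul_factorial (n l k : ℕ) :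
    ∑ u ∈ range (n + 1), ∑ v ∈ range (l + 1),
        (-1 : F) ^ (u + v) * (n + k).choose (n - u) * (l + k).choose (l - v) *
          ((u + v + k)! / (u ! * v !)) =
      if n = l then ((n + k)! / n ! : F) else 0 := by
  rcases le_total n l with hnl | hln
  · exact sum_sum_neg_one_pow_mul_choose_mul_factorial_of_le k hnl
  calc _ = ∑ v ∈ range (l + 1), ∑ u ∈ range (n + 1),
        (-1 : F) ^ (v + u) * (l + k).choose (l - v) * (n + k).choose (n - u) *
          ((v + u + k)! / (v ! * u !)) := by
        rw [Finset.sum_comm]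
        exact Finset.sum_congr rfl fun v _ => Finset.sum_congr rfl fun u _ => by
          rw [add_comm v u]; ring
    _ = _ := by
        rw [sum_sum_neg_one_pow_mul_choose_mul_factorial_of_le k hln]
        rcases eq_or_ne n l with rfl | h
        · rfl
        · rw [if_neg h.symm, if_neg h]

end DoubleSum

theorem integrableOn_pow_mul_exp_neg_mul_sq {b : ℝ} (hb : 0 < b) (j : ℕ) :
    IntegrableOn (fun r : ℝ => r ^ j * Real.exp (-b * r ^ 2)) (Set.Ioi 0) := by
  simpa only [Real.rpow_natCast] using
    integrableOn_rpow_mul_exp_neg_mul_sq hb (s := j) (by linarith [j.cast_nonneg (α := ℝ)])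

theorem integral_Ioi_pow_mul_exp_neg_mul_sq {b : ℝ} (hb : 0 < b) (m : ℕ) :
    ∫ r in Set.Ioi 0, r ^ (2 * m + 1) * Real.exp (-b * r ^ 2) = m ! / (2 * b ^ (m + 1)) := by
  have h := integral_rpow_mul_exp_neg_mul_rpow two_pos (q := ((2 * m + 1 : ℕ) : ℝ))
    (by linarith [(2 * m + 1).cast_nonneg (α := ℝ)]) hb
  have hexp : (-((2 * m + 1 : ℕ) + 1 : ℝ) / 2) = -((m + 1 : ℕ) : ℝ) := by push_cast; ring
  have hgam : (((2 * m + 1 : ℕ) + 1 : ℝ) / 2) = m + 1 := by push_cast; ring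
  simp only [Real.rpow_natCast, Real.rpow_two, hexp, hgam, Real.rpow_neg hb.le,
    Real.Gamma_nat_eq_factorial] at h
  rw [h]
  field_simp

theorem Complex.ofReal_pow_mul_exp_neg_mul_sq (b r : ℝ) (j : ℕ) :
    ((r ^ j * Real.exp (-b * r ^ 2) : ℝ) : ℂ) = (r : ℂ) ^ j * Complex.exp (-b * (r : ℂ) ^ 2) := by
  push_cast; rfl

theorem integrableOn_ofReal_pow_mul_cexp_neg_mul_sq {b : ℝ} (hb : 0 < b) (j : ℕ) :
    IntegrableOn (fun r : ℝ => (r : ℂ) ^ j * Complex.exp (-b * (r : ℂ) ^ 2)) (Set.Ioi 0) :=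
  ((integrableOn_pow_mul_exp_neg_mul_sq hb j).ofReal (𝕜 := ℂ)).congr
    (ae_of_all _ fun r => Complex.ofReal_pow_mul_exp_neg_mul_sq b r j)

theorem integral_Ioi_ofReal_pow_mul_cexp_neg_mul_sq {b : ℝ} (hb : 0 < b) (m : ℕ) :
    ∫ r in Set.Ioi (0 : ℝ), (r : ℂ) ^ (2 * m + 1) * Complex.exp (-b * (r : ℂ) ^ 2) =
      m ! / (2 * (b : ℂ) ^ (m + 1)) := by
  simp_rw [← Complex.ofReal_pow_mul_exp_neg_mul_sq]
  rw [integral_complex_ofReal, integral_Ioi_pow_mul_exp_neg_mul_sq hb]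
  push_cast; rfl

noncomputable def Kfun.coeff (lam : ℂ) (n k u : ℕ) : ℂ :=
  lam ^ (n - u) / u ! * (n + k).choose (n - u) * (1 - lam) ^ (2 * u)

theorem Kfun_mul_Kfun_mul_eq_sum (a b : ℂ) (n l k : ℕ) (r : ℝ) :
    Kfun a n k r * Kfun b l k r * r =
      ((√(n ! / (n + k)!) * √(l ! / (l + k)!) : ℝ) : ℂ) * ((1 - a) * (1 - b)) ^ (k + 1) *
        ∑ u ∈ range (n + 1), ∑ v ∈ range (l + 1), Kfun.coeff a n k u * Kfun.coeff b l k v *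
          ((r : ℂ) ^ (2 * (u + v + k) + 1) * Complex.exp (-((1 - a) + (1 - b)) * (r : ℂ) ^ 2)) := by
  simp only [Kfun, Kfun.coeff]
  conv_lhs => rw [Finset.mul_sum, Finset.mul_sum, Finset.sum_mul_sum]
  simp only [Finset.sum_mul, Finset.mul_sum]
  refine Finset.sum_congr rfl fun u _ => Finset.sum_congr rfl fun v _ => ?_
  rw [neg_add, add_mul, Complex.exp_add, mul_pow]
  push_cast
  ring

theorem integral_Kfun_mul_Kfun_mul {a b : ℝ} (hab : 0 < (1 - a) + (1 - b)) (n l k : ℕ) :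
    ∫ r in Set.Ioi 0, Kfun a n k r * Kfun b l k r * r =
      ((√(n ! / (n + k)!) * √(l ! / (l + k)!) : ℝ) : ℂ) * ((1 - a) * (1 - b)) ^ (k + 1) *
        ∑ u ∈ range (n + 1), ∑ v ∈ range (l + 1), Kfun.coeff a n k u * Kfun.coeff b l k v *
          ((u + v + k)! / (2 * ((1 - a) + (1 - b)) ^ (u + v + k + 1))) := by
  have hc : -((1 - (a : ℂ)) + (1 - b)) = -(((1 - a) + (1 - b) : ℝ) : ℂ) := by push_cast; rfl
  simp_rw [Kfun_mul_Kfun_mul_eq_sum, hc]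
  have hint (j : ℕ) (C : ℂ) := (integrableOn_ofReal_pow_mul_cexp_neg_mul_sq hab j).const_mul C
  rw [integral_const_mul,
    integral_finsetSum _ fun u _ => integrable_finsetSum _ fun v _ => hint _ _]
  congr 1
  refine Finset.sum_congr rfl fun u _ => ?_
  rw [integral_finsetSum _ fun v _ => hint _ _]
  refine Finset.sum_congr rfl fun v _ => ?_
  rw [integral_const_mul, integral_Ioi_ofReal_pow_mul_cexp_neg_mul_sq hab]
  push_cast; rfl

theorem Kfun.coeff_mul_coeff_inv {a : ℂ} (ha : a ≠ 0) (ha1 : a ≠ 1) {n l u v : ℕ} (k : ℕ)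
    (hu : u ≤ n) (hv : v ≤ l) (F : ℂ) :
    ((1 - a) * (1 - 1 / a)) ^ (k + 1) * (Kfun.coeff a n k u * Kfun.coeff (1 / a) l k v *
      (F / (2 * ((1 - a) + (1 - 1 / a)) ^ (u + v + k + 1)))) =
    a ^ n / a ^ l / 2 * ((-1) ^ (u + v) * (n + k).choose (n - u) * (l + k).choose (l - v) *
      (F / (u ! * v !))) := by
  have hsum : (1 - a) + (1 - 1 / a) = (1 - a) * (1 - 1 / a) := by field_simp; ring
  have hprod : (1 - a) * (1 - 1 / a) = -1 * ((1 - a) ^ 2 / a) := by field_simp; ring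
  have hsq : (1 - 1 / a) ^ 2 = (1 - a) ^ 2 / a ^ 2 := by field_simp; ring
  have hX : (1 - a) ^ 2 ≠ 0 := pow_ne_zero 2 (sub_ne_zero.mpr (Ne.symm ha1))
  have hufact : (u ! : ℂ) ≠ 0 := Nat.cast_ne_zero.mpr u.factorial_ne_zero
  have hvfact : (v ! : ℂ) ≠ 0 := Nat.cast_ne_zero.mpr v.factorial_ne_zero
  -- Writing every `-1` as `(-1)⁻¹` lets `field_simp` cancel the signs on the two sides.
  rw [hsum, hprod, Kfun.coeff, Kfun.coeff, pow_sub₀ _ ha hu, pow_sub₀ _ (one_div_ne_zero ha) hv,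
    pow_mul, pow_mul, hsq, ← inv_neg_one, inv_pow]
  generalize (1 - a) ^ 2 = X at hX ⊢
  simp only [mul_pow, div_pow, pow_add]
  field_simp
  ring

theorem Kfun.sum_sum_coeff_mul_coeff_inv {a : ℂ} (ha : a ≠ 0) (ha1 : a ≠ 1) (n l k : ℕ) :
    ((1 - a) * (1 - 1 / a)) ^ (k + 1) *
        ∑ u ∈ range (n + 1), ∑ v ∈ range (l + 1), Kfun.coeff a n k u * Kfun.coeff (1 / a) l k v *
          ((u + v + k)! / (2 * ((1 - a) + (1 - 1 / a)) ^ (u + v + k + 1))) =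
      a ^ n / a ^ l / 2 * if n = l then ((n + k)! / n ! : ℂ) else 0 := by
  simp only [Finset.mul_sum]
  rw [Finset.sum_congr rfl fun u hu => Finset.sum_congr rfl fun v hv =>
    Kfun.coeff_mul_coeff_inv ha ha1 k (mem_range_succ_iff.mp hu) (mem_range_succ_iff.mp hv) _,
    ← sum_sum_neg_one_pow_mul_choose_mul_factorial]
  simp only [Finset.mul_sum]

/-- Orthogonality: for `λ ∈ (−1,0)`,
`∫_0^∞ K^λ_{n,n+k}(r) K^{1/λ}_{l,l+k}(r) r dr = (1/2)·δ_{nl}`. -/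
theorem stmt_9 (lam : ℝ) (hlam : lam ∈ Set.Ioo (-1 : ℝ) 0) (n l k : ℕ) :
    (∫ r in Set.Ioi (0 : ℝ),
        Kfun (lam : ℂ) n k r * Kfun (1 / (lam : ℂ)) l k r * (r : ℂ)) =
      if n = l then (1 / 2 : ℂ) else 0 := by
  have hneg : lam < 0 := hlam.2
  have hlam0 : (lam : ℂ) ≠ 0 := by exact_mod_cast hneg.ne
  have hlam1 : (lam : ℂ) ≠ 1 := by exact_mod_cast (hneg.trans one_pos).ne
  have hpos : 0 < (1 - lam) + (1 - 1 / lam) := by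
    linarith [one_div_neg.mpr hneg]
  rw [show 1 / (lam : ℂ) = ((1 / lam : ℝ) : ℂ) by push_cast; rfl,
    integral_Kfun_mul_Kfun_mul hpos]
  simp only [Complex.ofReal_div, Complex.ofReal_one]
  rw [mul_assoc, Kfun.sum_sum_coeff_mul_coeff_inv hlam0 hlam1]
  split_ifs with h
  · subst h
    rw [Real.mul_self_sqrt (by positivity)]
    have : ((n + k)! : ℂ) ≠ 0 := Nat.cast_ne_zero.mpr (n + k).factorial_ne_zero
    have : (n ! : ℂ) ≠ 0 := Nat.cast_ne_zero.mpr n.factorial_ne_zero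
    push_cast
    field_simp
  · simp
end

section
/- Let λ ∈ ℂ with 0 < |λ| < 1, let (c_n)_{n∈ℕ} be a sequence of complex numbers with |c_n| ≤ 1 for all n, and let h, j ∈ ℕ. Then the 2j-th derivative at r = 0 of the function r ↦ e^{(1−λ)r²}·∑_{n=0}^∞ c_n·K^λ_{n,n+2h}(r) exists and equals C(2j, j−h)·(1−λ)^{2j+1}·λ^{h−j}·∑_{n=max(0, j−h)}^∞ c_n·λ^n·√((n+2h)!·n!)/(n−j+h)!, where C(2j, j−h) denotes the binomial coefficient, interpreted as 0 when j < h, and the series on the right converges absolutely. -/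
/-!
Multiplying by `exp ((1 - λ) r²)` cancels the Gaussian factor of every `K^λ_{n,n+2h}`, so `F` is
the double series `∑ₙ ∑_{u ≤ n} eₙᵤ r^(2h+2u)` of monomials. Bounding `C(n+2h, u+2h)` by
`(1+t)^(n+2h) / t^(u+2h)` dominates `|eₙᵤ|` by a geometric series in `n - u` (ratio `|λ|(1+t) < 1`)
times an exponential series in `u`, so the double series converges absolutely for `|r| ≤ 1` and can
be summed in either order. Thus `F` is analytic at `0` with `r^(2j)`-coefficient `∑ₙ eₙ,ⱼ₋ₕ`
(zero when `j < h`), the `2j`-th derivative is `(2j)!` times it, and the factorials combine into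
`C(2j, j-h) √((n+2h)! n!) / (n-j+h)!`.
-/

open Function
open scoped Nat ENNReal

section PowerSeries

variable {𝕜 E : Type*} [NontriviallyNormedField 𝕜] [NormedAddCommGroup E] [NormedSpace 𝕜 E]
  [CompleteSpace E]

theorem HasFPowerSeriesOnBall.iteratedDeriv_eq_factorial_smul_coeff {f : 𝕜 → E}
    {p : FormalMultilinearSeries 𝕜 𝕜 E} {x : 𝕜} {r : ℝ≥0∞} (hf : HasFPowerSeriesOnBall f p x r)
    (n : ℕ) : iteratedDeriv n f x = n ! • p.coeff n := by
  rw [iteratedDeriv_eq_iteratedFDeriv, ← hf.factorial_smul 1 n, p.apply_eq_pow_smul_coeff,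
    one_pow, one_smul]

theorem hasFPowerSeriesOnBall_tsum_tsum_pow_smul {a : ℕ → ℕ → E} {g : ℕ → ℕ} (hg : Injective g)
    (ha : Summable fun p : ℕ × ℕ => ‖a p.1 p.2‖) :
    HasFPowerSeriesOnBall (fun x : 𝕜 => ∑' n, ∑' u, x ^ g u • a u n)
      (fun i => ContinuousMultilinearMap.mkPiRing 𝕜 (Fin i) (extend g (fun u => ∑' n, a u n) 0 i))
      0 1 := by
  have hcoeff : Summable fun u => ‖∑' n, a u n‖ :=
    ha.prod.of_nonneg_of_le (fun _ => norm_nonneg _)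
      fun u => norm_tsum_le_tsum_norm (ha.prod_factor u)
  refine ⟨?_, one_pos, fun {y} hy => ?_⟩
  · refine ENNReal.coe_one ▸ FormalMultilinearSeries.le_radius_of_summable _ ?_
    simp only [ContinuousMultilinearMap.norm_mkPiRing, NNReal.coe_one, one_pow, mul_one,
      apply_extend, comp_def, Pi.zero_apply, norm_zero]
    exact (summable_extend_zero hg).2 hcoeff
  · have hy1 : ‖y‖ ≤ 1 := by
      have := mem_eball_zero_iff.mp hy
      rw [enorm_eq_nnnorm] at this
      exact_mod_cast this.le
    have hsum : Summable (uncurry fun u n => y ^ g u • a u n) := by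
      refine ha.of_norm_bounded fun p => ?_
      rw [uncurry, norm_smul, norm_pow]
      exact mul_le_of_le_one_left (norm_nonneg _) (pow_le_one₀ (norm_nonneg _) hy1)
    have hterm : (fun i => ContinuousMultilinearMap.mkPiRing 𝕜 (Fin i)
        (extend g (fun u => ∑' n, a u n) 0 i) fun _ => y) =
        extend g (fun u => ∑' n, y ^ g u • a u n) 0 := by
      ext i
      rw [ContinuousMultilinearMap.mkPiRing_apply, Finset.prod_const, Finset.card_univ,
        Fintype.card_fin]
      by_cases hi : ∃ u, g u = i
      · obtain ⟨u, rfl⟩ := hi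
        rw [hg.extend_apply, hg.extend_apply, tsum_const_smul'']
      · rw [extend_apply' _ _ _ hi, extend_apply' _ _ _ hi, Pi.zero_apply, smul_zero]
    rw [zero_add, hterm, hasSum_extend_zero hg, hsum.tsum_comm]
    exact hsum.prod.hasSum

theorem iteratedDeriv_tsum_tsum_pow_smul {a : ℕ → ℕ → E} {g : ℕ → ℕ} (hg : Injective g)
    (ha : Summable fun p : ℕ × ℕ => ‖a p.1 p.2‖) (i : ℕ) :
    iteratedDeriv i (fun x : 𝕜 => ∑' n, ∑' u, x ^ g u • a u n) 0 =
      i ! • extend g (fun u => ∑' n, a u n) 0 i := by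
  rw [(hasFPowerSeriesOnBall_tsum_tsum_pow_smul hg ha).iteratedDeriv_eq_factorial_smul_coeff]
  simp [FormalMultilinearSeries.coeff]

end PowerSeries

theorem Nat.choose_mul_pow_le_one_add_pow (N i : ℕ) {t : ℝ} (ht : 0 ≤ t) :
    (N.choose i : ℝ) * t ^ i ≤ (1 + t) ^ N := by
  rcases le_or_gt i N with hi | hi
  · rw [add_comm, add_pow]
    refine le_trans (le_of_eq (by ring)) (Finset.single_le_sum (f := fun m => t ^ m * 1 ^ (N - m) *
      (N.choose m : ℝ)) (fun m _ => by positivity) (Finset.mem_range.2 (Nat.lt_succ_of_le hi)))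
  · rw [Nat.choose_eq_zero_of_lt hi, Nat.cast_zero, zero_mul]
    positivity

/-- The coefficient of `r ^ (k + 2 * u)` in `exp ((1 - λ) r²) * K^λ_{n,n+k}(r)`. The binomial
`C(n+k, u+k)` equals the `C(n+k, n-u)` of `Kfun` for `u ≤ n` and vanishes for `u > n`. -/
noncomputable def kfunCoeff (lam : ℂ) (n k u : ℕ) : ℂ :=
  ((√((n ! : ℝ) / ((n + k)! : ℝ)) : ℝ) : ℂ) * (1 - lam) ^ (k + 1) * lam ^ (n - u) / (u ! : ℂ) *
    ((n + k).choose (u + k) : ℂ) * (1 - lam) ^ (2 * u)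

section kfunCoeff

variable {lam : ℂ}

theorem kfunCoeff_eq_zero_of_lt {n k u : ℕ} (hnu : n < u) : kfunCoeff lam n k u = 0 := by
  simp [kfunCoeff, Nat.choose_eq_zero_of_lt (by omega : n + k < u + k)]

theorem exp_mul_Kfun (n k : ℕ) (r : ℝ) :
    Complex.exp ((1 - lam) * r ^ 2) * Kfun lam n k r =
      ∑' u, r ^ (k + 2 * u) • kfunCoeff lam n k u := by
  rw [tsum_eq_sum (s := Finset.range (n + 1)) fun u hu => by
    rw [kfunCoeff_eq_zero_of_lt (by simpa using hu), smul_zero]]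
  rw [Kfun, Finset.mul_sum, Finset.mul_sum]
  refine Finset.sum_congr rfl fun u hu => ?_
  have hun : u ≤ n := Nat.lt_succ_iff.mp (Finset.mem_range.mp hu)
  rw [kfunCoeff, Nat.choose_symm_of_eq_add (by omega : n + k = n - u + (u + k)), Complex.real_smul,
    Complex.ofReal_pow, neg_mul, Complex.exp_neg]
  field_simp
  ring

theorem norm_kfunCoeff_add_le (k u m : ℕ) {t : ℝ} (ht : 0 < t) :
    ‖kfunCoeff lam (u + m) k u‖ ≤ ‖1 - lam‖ ^ (k + 1) * ((1 + t) / t) ^ k *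
      (‖lam‖ * (1 + t)) ^ m * (((1 + t) * ‖1 - lam‖ ^ 2 / t) ^ u / u !) := by
  have hsqrt : √(((u + m)! : ℝ) / ((u + m + k)! : ℝ)) ≤ 1 :=
    Real.sqrt_le_one.mpr <| div_le_one_of_le₀ (by exact_mod_cast Nat.factorial_le (by omega))
      (by positivity)
  have hchoose : ((u + m + k).choose (u + k) : ℝ) ≤ (1 + t) ^ (u + m + k) / t ^ (u + k) :=
    (le_div_iff₀ (by positivity)).mpr (Nat.choose_mul_pow_le_one_add_pow _ _ ht.le)
  simp only [kfunCoeff, norm_mul, norm_div, norm_pow, Complex.norm_real, Real.norm_eq_abs,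
    abs_of_nonneg (Real.sqrt_nonneg _), Complex.norm_natCast, Nat.add_sub_cancel_left]
  calc _ ≤ 1 * ‖1 - lam‖ ^ (k + 1) * ‖lam‖ ^ m / (u ! : ℝ) *
        ((1 + t) ^ (u + m + k) / t ^ (u + k)) * ‖1 - lam‖ ^ (2 * u) := by gcongr
    _ = _ := by
      rw [div_pow, div_pow, mul_pow, mul_pow, ← pow_mul, pow_add, pow_add, pow_add]
      field_simp
      ring

theorem summable_norm_kfunCoeff (hlam0 : 0 < ‖lam‖) (hlam1 : ‖lam‖ < 1) (k : ℕ) :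
    Summable fun p : ℕ × ℕ => ‖kfunCoeff lam p.2 k p.1‖ := by
  obtain ⟨t, ht, hρ⟩ : ∃ t : ℝ, 0 < t ∧ ‖lam‖ * (1 + t) < 1 :=
    ⟨(1 - ‖lam‖) / (2 * ‖lam‖), div_pos (by linarith) (by positivity), by field_simp; linarith⟩
  have hmajorant : Summable fun p : ℕ × ℕ => ‖1 - lam‖ ^ (k + 1) * ((1 + t) / t) ^ k *
      (‖lam‖ * (1 + t)) ^ p.2 * (((1 + t) * ‖1 - lam‖ ^ 2 / t) ^ p.1 / p.1 !) :=
    ((Real.summable_pow_div_factorial ((1 + t) * ‖1 - lam‖ ^ 2 / t)).mul_of_nonneg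
      ((summable_geometric_of_lt_one (by positivity) hρ).mul_left
        (‖1 - lam‖ ^ (k + 1) * ((1 + t) / t) ^ k))
      (fun _ => by positivity) fun _ => by positivity).congr fun _ => by ring
  have hinj : Injective fun p : ℕ × ℕ => (p.1, p.1 + p.2) := fun p q hpq => by
    simp only [Prod.mk.injEq] at hpq
    exact Prod.ext hpq.1 (by omega)
  refine (hinj.summable_iff fun p hp => ?_).mp
    (hmajorant.of_nonneg_of_le (fun _ => norm_nonneg _) fun p => norm_kfunCoeff_add_le _ _ _ ht)
  rw [kfunCoeff_eq_zero_of_lt (not_le.mp fun hle =>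
    hp ⟨(p.1, p.2 - p.1), Prod.ext rfl (Nat.add_sub_cancel' hle)⟩), norm_zero]

theorem factorial_mul_kfunCoeff_add_left (d m k : ℕ) :
    ((d ! * (d + k)! : ℕ) : ℂ) * kfunCoeff lam (d + m) k d = (1 - lam) ^ (k + 2 * d + 1) *
      lam ^ m * ((√(((d + m + k)! : ℝ) * ((d + m)! : ℝ)) : ℝ) : ℂ) / (m ! : ℂ) := by
  have hchoose : ((d + m + k).choose (d + k) : ℂ) = ((d + m + k)! : ℂ) / ((d + k)! * m !) := by
    rw [Nat.cast_choose ℂ (by omega : d + k ≤ d + m + k), show d + m + k - (d + k) = m by omega]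
  have hsqrt : √(((d + m)! : ℝ) / ((d + m + k)! : ℝ)) =
      √(((d + m + k)! : ℝ) * ((d + m)! : ℝ)) / ((d + m + k)! : ℝ) := by
    rw [Real.sqrt_div' _ (by positivity), Real.sqrt_mul' _ (by positivity)]
    field_simp
    rw [Real.sq_sqrt (by positivity)]
  have hfac : ∀ i, (i ! : ℂ) ≠ 0 := fun i => Nat.cast_ne_zero.mpr i.factorial_ne_zero
  rw [kfunCoeff, Nat.add_sub_cancel_left, hchoose, hsqrt]
  push_cast
  field_simp [hfac]
  ring

theorem factorial_mul_tsum_mul_kfunCoeff (hlam : lam ≠ 0) (c : ℕ → ℂ) (k d : ℕ) :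
    ((k + 2 * d)! : ℂ) * ∑' n, c n * kfunCoeff lam n k d =
      ((k + 2 * d).choose d : ℂ) * (1 - lam) ^ (k + 2 * d + 1) * lam ^ (-(d : ℤ)) *
        ∑' m, c (d + m) * lam ^ (d + m) *
          ((√(((d + m + k)! : ℝ) * ((d + m)! : ℝ)) : ℝ) : ℂ) / (m ! : ℂ) := by
  have hsupport : support (fun n => c n * kfunCoeff lam n k d) ⊆ Set.range (d + ·) := by
    intro n hn
    by_contra hnd
    refine hn ?_
    dsimp only
    rw [kfunCoeff_eq_zero_of_lt (not_le.mp fun hle => hnd ⟨n - d, Nat.add_sub_cancel' hle⟩),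
      mul_zero]
  have hfac : ((k + 2 * d)! : ℂ) = ((k + 2 * d).choose d : ℂ) * ((d ! * (d + k)! : ℕ) : ℂ) := by
    have := Nat.choose_mul_factorial_mul_factorial (by omega : d ≤ k + 2 * d)
    rw [show k + 2 * d - d = d + k by omega] at this
    rw [← Nat.cast_mul, ← mul_assoc, this]
  rw [← (add_right_injective d).tsum_eq hsupport, hfac, ← tsum_mul_left, ← tsum_mul_left]
  refine tsum_congr fun m => ?_
  calc _ = ((k + 2 * d).choose d : ℂ) * c (d + m) *
        (((d ! * (d + k)! : ℕ) : ℂ) * kfunCoeff lam (d + m) k d) := by ring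
    _ = _ := by
      rw [factorial_mul_kfunCoeff_add_left, zpow_neg, zpow_natCast, pow_add]
      field_simp
      ring

theorem summable_norm_pow_mul_sqrt_factorial_div (hlam0 : 0 < ‖lam‖) (hlam1 : ‖lam‖ < 1)
    (k d : ℕ) : Summable fun m : ℕ =>
      ‖lam ^ (d + m) * ((√(((d + m + k)! : ℝ) * ((d + m)! : ℝ)) : ℝ) : ℂ) / (m ! : ℂ)‖ := by
  have hlam : lam ≠ 0 := norm_pos_iff.mp hlam0
  have hlam_ne_one : 1 - lam ≠ 0 := sub_ne_zero.mpr fun h => by simp [← h] at hlam1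
  have hrow : Summable fun m => ‖kfunCoeff lam (d + m) k d‖ :=
    ((summable_norm_kfunCoeff hlam0 hlam1 k).prod_factor d).comp_injective (add_right_injective d)
  refine (hrow.mul_left ‖lam ^ d * ((d ! * (d + k)! : ℕ) : ℂ) / (1 - lam) ^ (k + 2 * d + 1)‖).congr
    fun m => ?_
  rw [← norm_mul, mul_div_right_comm, mul_assoc, factorial_mul_kfunCoeff_add_left, pow_add]
  congr 1
  field_simp
  ring

end kfunCoeff

/-- Even case of the differentiated series (equation (16) of the paper):
for `0 < |λ| < 1`, `|c_n| ≤ 1`, `k = 2h`, `l = 2j`, the `2j`-th derivative at `0` of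
`r ↦ e^{(1−λ)r²} ∑_n c_n K^λ_{n,n+2h}(r)` exists and equals
`C(2j, j−h) (1−λ)^{2j+1} λ^{h−j} ∑_{n=max(0,j−h)}^∞ c_n λ^n √((n+2h)! n!)/(n−j+h)!`,
the series converging absolutely. -/
theorem stmt_12 (lam : ℂ) (hlam0 : 0 < ‖lam‖) (hlam1 : ‖lam‖ < 1)
    (c : ℕ → ℂ) (hc : ∀ n, ‖c n‖ ≤ 1) (h j : ℕ)
    (F : ℝ → ℂ)
    (hF : ∀ r : ℝ, F r = Complex.exp ((1 - lam) * (r : ℂ) ^ 2) *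
      ∑' n : ℕ, c n * Kfun lam n (2 * h) r) :
    Summable (fun m : ℕ => ‖
      (c ((j - h) + m) * lam ^ ((j - h) + m) *
        ((Real.sqrt ((((j - h) + m + 2 * h).factorial : ℝ) * (((j - h) + m).factorial : ℝ)) : ℝ) : ℂ) /
        ((((j - h) + m + h - j).factorial : ℕ) : ℂ))‖) ∧
    ContDiffAt ℝ ((2 * j : ℕ) : ℕ∞) F 0 ∧
    iteratedDeriv (2 * j) F 0 =
      (if h ≤ j then (((2 * j).choose (j - h) : ℕ) : ℂ) else 0) *
        (1 - lam) ^ (2 * j + 1) * lam ^ ((h : ℤ) - (j : ℤ)) *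
        ∑' m : ℕ,
          c ((j - h) + m) * lam ^ ((j - h) + m) *
            ((Real.sqrt ((((j - h) + m + 2 * h).factorial : ℝ) * (((j - h) + m).factorial : ℝ)) : ℝ) : ℂ) /
            ((((j - h) + m + h - j).factorial : ℕ) : ℂ) := by
  have hF_eq : F = fun x : ℝ =>
      ∑' n, ∑' u, x ^ (2 * h + 2 * u) • (c n * kfunCoeff lam n (2 * h) u) := by
    funext r
    rw [hF, ← tsum_mul_left]
    refine tsum_congr fun n => ?_
    rw [mul_left_comm, exp_mul_Kfun, ← tsum_mul_left]
    exact tsum_congr fun u => mul_smul_comm _ _ _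
  subst hF_eq
  have hg : Injective fun u => 2 * h + 2 * u := fun a b hab => by dsimp only at hab; omega
  have ha : Summable fun p : ℕ × ℕ => ‖c p.2 * kfunCoeff lam p.2 (2 * h) p.1‖ :=
    (summable_norm_kfunCoeff hlam0 hlam1 (2 * h)).of_nonneg_of_le (fun _ => norm_nonneg _)
      fun p => by rw [norm_mul]; exact mul_le_of_le_one_left (norm_nonneg _) (hc _)
  have hser := hasFPowerSeriesOnBall_tsum_tsum_pow_smul (𝕜 := ℝ)
    (a := fun u n => c n * kfunCoeff lam n (2 * h) u) hg ha
  refine ⟨(summable_norm_pow_mul_sqrt_factorial_div hlam0 hlam1 (2 * h) (j - h)).of_nonneg_of_le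
    (fun _ => norm_nonneg _) fun m => ?_, ?_, ?_⟩
  · rw [mul_assoc, norm_div, norm_div, norm_mul (c _), Complex.norm_natCast, Complex.norm_natCast]
    exact div_le_div₀ (norm_nonneg _) (mul_le_of_le_one_left (norm_nonneg _) (hc _))
      (by positivity) (by exact_mod_cast Nat.factorial_le (by omega))
  · exact hser.analyticAt.contDiffAt
  · rw [iteratedDeriv_tsum_tsum_pow_smul (𝕜 := ℝ)
      (a := fun u n => c n * kfunCoeff lam n (2 * h) u) hg ha]
    split_ifs with hhj
    · obtain ⟨d, rfl⟩ := Nat.exists_eq_add_of_le hhj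
      have hm : ∀ m, d + m + h - (h + d) = m := fun m => by omega
      simp only [Nat.add_sub_cancel_left, hm]
      rw [show 2 * (h + d) = 2 * h + 2 * d by ring, hg.extend_apply, nsmul_eq_mul,
        factorial_mul_tsum_mul_kfunCoeff (norm_pos_iff.mp hlam0),
        show (h : ℤ) - ((h + d : ℕ) : ℤ) = -(d : ℤ) by push_cast; ring]
    · rw [extend_apply' _ _ _ fun ⟨u, hu⟩ => hhj (by omega), Pi.zero_apply, smul_zero, zero_mul,
        zero_mul, zero_mul]
end

section
/- Let λ ∈ ℂ with |λ| < 1, let l ∈ ℕ, and let (ρ_{n'})_{n'∈ℕ} be complex numbers with |ρ_{n'}| ≤ 1 for all n'. Set x_{n'} := λ^{n'}·√((n'+l)!·n'!)·ρ_{n'}, and for n ∈ ℕ and integers k ≥ n define R^n_k := ∑_{n'=k+1}^∞ ∑_{p=n}^k (−1)^{p+n}·x_{n'}/((p−n)!·(n'−p)!). Then |R^n_k| ≤ ((k+l)!/(k−n)!)·(1−|λ|)^{−(l+1)}·(|λ|/(1−|λ|))^k; consequently, if |λ| < 1/2, then lim_{k→∞} R^n_k = 0 for every n ∈ ℕ.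 -/
/-!
Put `K = k - n` and `M = K + m + 1`. Substituting `p = n + j`, the inner sum of the `m`-th term of
`R^n_k` is `x_{k+1+m} / M! · ∑_{j ≤ K} (-1)^j C(M, j)`, and this partial alternating binomial sum
equals `(-1)^K C(M - 1, K)`. Together with `|x_N| ≤ |λ|^N (N + l)!` this bounds the `m`-th term by
`(k + l)!/K! · |λ|^k · C(m + 1 + k + l, k + l) |λ|^(m + 1)`, and the negative binomial series
`∑_j C(j + A, A) q^j = (1 - q)^(-(A + 1))` sums these bounds. Finally `(k + l)!/(k - n)!` grows
only polynomially in `k`, so the bound tends to `0` when `|λ|/(1 - |λ|) < 1`, i.e. `|λ| < 1/2`.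
-/

open Filter Finset
open scoped Nat

section Coefficients

variable {𝕜 : Type*} [Field 𝕜] [CharZero 𝕜]

theorem sum_range_neg_one_pow_div_factorial_mul_factorial (K m : ℕ) :
    ∑ j ∈ range (K + 1), (-1 : 𝕜) ^ j / (j ! * (K + m + 1 - j)!) =
      (-1) ^ K * (K + m).choose K / (K + m + 1)! := by
  have hterm : ∀ j ∈ range (K + 1), (-1 : 𝕜) ^ j / (j ! * (K + m + 1 - j)!) =
      (-1) ^ j * (K + m + 1).choose j / (K + m + 1)! := by
    intro j hj
    have : ((K + m + 1)! : 𝕜) ≠ 0 := Nat.cast_ne_zero.2 (Nat.factorial_ne_zero _)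
    rw [Nat.cast_choose 𝕜 (by grind)]
    field_simp
  have halt : ∑ j ∈ range (K + 1), (-1 : 𝕜) ^ j * (K + m + 1).choose j =
      (-1) ^ K * (K + m).choose K := by
    exact_mod_cast Int.alternating_sum_range_choose_eq_choose
  rw [sum_congr rfl hterm, ← sum_div, halt]

theorem sum_Icc_neg_one_pow_div_factorial_mul_factorial {n k : ℕ} (hnk : n ≤ k) (m : ℕ) :
    ∑ p ∈ Icc n k, (-1 : 𝕜) ^ (p + n) / ((p - n)! * (k + 1 + m - p)!) =
      (-1) ^ (k - n) * (k - n + m).choose (k - n) / (k - n + m + 1)! := by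
  rw [← Ico_add_one_right_eq_Icc, sum_Ico_eq_sum_range, show k + 1 - n = k - n + 1 by omega,
    ← sum_range_neg_one_pow_div_factorial_mul_factorial]
  refine sum_congr rfl fun j _ => ?_
  rw [show n + j + n = j + 2 * n by ring, pow_add, pow_mul, neg_one_sq, one_pow, mul_one,
    Nat.add_sub_cancel_left, show k + 1 + m - (n + j) = k - n + m + 1 - j by omega]

end Coefficients

theorem choose_div_factorial_le (K m : ℕ) :
    ((K + m).choose K : ℝ) / (K + m + 1)! ≤ 1 / (K ! * (m + 1)!) := by
  calc ((K + m).choose K : ℝ) / (K + m + 1)! = 1 / (K ! * m ! * (K + m + 1)) := by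
        rw [Nat.cast_add_choose, Nat.factorial_succ (K + m)]
        push_cast
        field_simp
    _ ≤ 1 / (K ! * m ! * (m + 1)) := by gcongr; linarith [(K.cast_nonneg : (0 : ℝ) ≤ K)]
    _ = 1 / (K ! * (m + 1)!) := by push_cast [Nat.factorial_succ]; ring

section Remainder

variable {𝕜 : Type*} [RCLike 𝕜] {x : ℕ → 𝕜} {q : ℝ} {l : ℕ}

theorem norm_mul_alternating_coeff_le (hq : 0 ≤ q) (hx : ∀ N, ‖x N‖ ≤ q ^ N * (N + l)!)
    (K k m : ℕ) :
    ‖x (k + 1 + m) * ((-1) ^ K * (K + m).choose K / (K + m + 1)!)‖ ≤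
      (k + l)! / K ! * q ^ k * ((m + 1 + (k + l)).choose (k + l) * q ^ (m + 1)) := by
  have hcoeff : ‖(-1 : 𝕜) ^ K * (K + m).choose K / (K + m + 1)!‖ =
      ((K + m).choose K : ℝ) / (K + m + 1)! := by
    simp only [norm_div, norm_mul, norm_pow, norm_neg, norm_one, one_pow, one_mul,
      RCLike.norm_natCast]
  have hfac := Nat.add_choose_mul_factorial_mul_factorial (m + 1) (k + l)
  rw [norm_mul, hcoeff]
  calc _ ≤ q ^ (k + 1 + m) * (k + 1 + m + l)! * (1 / (K ! * (m + 1)!)) :=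
        mul_le_mul (hx _) (choose_div_factorial_le K m) (by positivity) (by positivity)
    _ = _ := by
        rw [show k + 1 + m + l = m + 1 + (k + l) by ring, ← hfac]
        push_cast
        field_simp
        ring

theorem summable_mul_alternating_coeff (hq0 : 0 ≤ q) (hq1 : q < 1)
    (hx : ∀ N, ‖x N‖ ≤ q ^ N * (N + l)!) (K k : ℕ) :
    Summable fun m => x (k + 1 + m) * ((-1) ^ K * (K + m).choose K / (K + m + 1)!) := by
  have hgeom := (summable_choose_mul_geometric_of_norm_lt_one (k + l)
    (by rwa [Real.norm_of_nonneg hq0] : ‖q‖ < 1))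
  exact Summable.of_norm_bounded (((summable_nat_add_iff 1).2 hgeom).mul_left _)
    (norm_mul_alternating_coeff_le hq0 hx K k)

theorem norm_tsum_mul_alternating_coeff_le (hq0 : 0 ≤ q) (hq1 : q < 1)
    (hx : ∀ N, ‖x N‖ ≤ q ^ N * (N + l)!) (K k : ℕ) :
    ‖∑' m, x (k + 1 + m) * ((-1) ^ K * (K + m).choose K / (K + m + 1)!)‖ ≤
      (k + l)! / K ! * (1 / (1 - q) ^ (l + 1)) * (q / (1 - q)) ^ k := by
  have hgeom := hasSum_choose_mul_geometric_of_norm_lt_one (k + l)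
    (by rwa [Real.norm_of_nonneg hq0] : ‖q‖ < 1)
  have hshift := (summable_nat_add_iff 1).2 hgeom.summable
  calc _ ≤ ∑' m, (k + l)! / K ! * q ^ k * ((m + 1 + (k + l)).choose (k + l) * q ^ (m + 1)) :=
        tsum_of_norm_bounded (hshift.mul_left _).hasSum (norm_mul_alternating_coeff_le hq0 hx K k)
    _ ≤ (k + l)! / K ! * q ^ k * ∑' m, (m + (k + l)).choose (k + l) * q ^ m := by
        rw [tsum_mul_left, hgeom.summable.tsum_eq_zero_add]
        gcongr
        exact le_add_of_nonneg_left (by positivity)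
    _ = (k + l)! / K ! * (1 / (1 - q) ^ (l + 1)) * (q / (1 - q)) ^ k := by
        have : 1 - q ≠ 0 := by linarith
        rw [hgeom.tsum_eq, div_pow, show k + l + 1 = l + 1 + k by ring, pow_add]
        field_simp

end Remainder

theorem norm_pow_mul_sqrt_factorial_mul_le (lam ρ : ℂ) (hρ : ‖ρ‖ ≤ 1) (N l : ℕ) :
    ‖lam ^ N * ((Real.sqrt (((N + l)! : ℝ) * (N ! : ℝ)) : ℝ) : ℂ) * ρ‖ ≤ ‖lam‖ ^ N * (N + l)! := by
  have hsqrt : Real.sqrt (((N + l)! : ℝ) * N !) ≤ (N + l)! := by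
    have : (N ! : ℝ) ≤ (N + l)! := by exact_mod_cast Nat.factorial_le (Nat.le_add_right N l)
    rw [Real.sqrt_le_iff]
    exact ⟨by positivity, by nlinarith [(N !).cast_nonneg (α := ℝ)]⟩
  rw [norm_mul, norm_mul, norm_pow, Complex.norm_real, Real.norm_of_nonneg (Real.sqrt_nonneg _)]
  calc _ ≤ ‖lam‖ ^ N * (N + l)! * 1 := by gcongr
    _ = _ := mul_one _

theorem tendsto_factorial_div_factorial_mul_pow (n l : ℕ) {c : ℝ} (hc0 : 0 ≤ c) (hc1 : c < 1) :
    Tendsto (fun k => ((k + l)! : ℝ) / (k - n)! * c ^ k) atTop (nhds 0) := by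
  have hpoly := (tendsto_pow_const_mul_const_pow_of_abs_lt_one (n + l)
    (by rwa [abs_of_nonneg hc0])).const_mul ((2 : ℝ) ^ (n + l))
  rw [mul_zero] at hpoly
  refine squeeze_zero' (Eventually.of_forall fun k => by positivity) ?_ hpoly
  filter_upwards [eventually_ge_atTop n, eventually_ge_atTop l] with k hkn hkl
  have hdesc : ((k + l)! : ℝ) / (k - n)! = (k + l).descFactorial (n + l) := by
    rw [div_eq_iff (by positivity), mul_comm, ← Nat.cast_mul, show k - n = k + l - (n + l) by omega,
      Nat.factorial_mul_descFactorial (by omega)]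
  have hpow : ((k + l).descFactorial (n + l) : ℝ) ≤ 2 ^ (n + l) * (k : ℝ) ^ (n + l) := by
    rw [← mul_pow]
    exact_mod_cast (Nat.descFactorial_le_pow _ _).trans (Nat.pow_le_pow_left (by omega) _)
  rw [hdesc, ← mul_assoc]
  gcongr

/-- The remainder bound controlling matrix inversion for the λ-distributions:
with `x_{n'} = λ^{n'} √((n'+l)! n'!) ρ_{n'}`, `|ρ_{n'}| ≤ 1`, and
`R^n_k = ∑_{n'=k+1}^∞ ∑_{p=n}^k (−1)^{p+n} x_{n'}/((p−n)!(n'−p)!)` (the defining series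
being summable), one has
`|R^n_k| ≤ ((k+l)!/(k−n)!) (1−|λ|)^{−(l+1)} (|λ|/(1−|λ|))^k` for `n ≤ k`;
consequently, if `|λ| < 1/2`, then `R^n_k → 0` as `k → ∞` for every `n`. -/
theorem stmt_14 (lam : ℂ) (hlam : ‖lam‖ < 1) (l : ℕ)
    (ρ : ℕ → ℂ) (hρ : ∀ n', ‖ρ n'‖ ≤ 1)
    (x : ℕ → ℂ)
    (hx : ∀ n' : ℕ, x n' = lam ^ n' *
      ((Real.sqrt (((n' + l).factorial : ℝ) * (n'.factorial : ℝ)) : ℝ) : ℂ) * ρ n')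
    (R : ℕ → ℕ → ℂ)
    (hR : ∀ n k : ℕ, R n k = ∑' m : ℕ, ∑ p ∈ Finset.Icc n k,
      (-1 : ℂ) ^ (p + n) * x (k + 1 + m) /
        (((p - n).factorial : ℂ) * (((k + 1 + m) - p).factorial : ℂ))) :
    (∀ n k : ℕ, n ≤ k → Summable fun m : ℕ => ∑ p ∈ Finset.Icc n k,
      (-1 : ℂ) ^ (p + n) * x (k + 1 + m) /
        (((p - n).factorial : ℂ) * (((k + 1 + m) - p).factorial : ℂ))) ∧
    (∀ n k : ℕ, n ≤ k →
      ‖R n k‖ ≤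
        ((k + l).factorial : ℝ) / ((k - n).factorial : ℝ) *
          (1 / (1 - ‖lam‖) ^ (l + 1)) *
          (‖lam‖ / (1 - ‖lam‖)) ^ k) ∧
    (‖lam‖ < 1 / 2 → ∀ n : ℕ, Tendsto (fun k => R n k) atTop (nhds 0)) := by
  set q := ‖lam‖
  have hq0 : 0 ≤ q := norm_nonneg lam
  have hxq : ∀ N, ‖x N‖ ≤ q ^ N * (N + l)! := fun N =>
    hx N ▸ norm_pow_mul_sqrt_factorial_mul_le lam (ρ N) (hρ N) N l
  have hinner : ∀ n k, n ≤ k → (fun m : ℕ => ∑ p ∈ Icc n k,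
      (-1 : ℂ) ^ (p + n) * x (k + 1 + m) / (((p - n)! : ℂ) * ((k + 1 + m - p)! : ℂ))) =
      fun m => x (k + 1 + m) * ((-1) ^ (k - n) * (k - n + m).choose (k - n) / (k - n + m + 1)!) := by
    intro n k hnk
    funext m
    rw [← sum_Icc_neg_one_pow_div_factorial_mul_factorial hnk, mul_sum]
    exact sum_congr rfl fun p _ => by ring
  have hbound : ∀ n k, n ≤ k → ‖R n k‖ ≤
      (k + l)! / (k - n)! * (1 / (1 - q) ^ (l + 1)) * (q / (1 - q)) ^ k := fun n k hnk => by
    rw [hR, hinner n k hnk]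
    exact norm_tsum_mul_alternating_coeff_le hq0 hlam hxq (k - n) k
  refine ⟨fun n k hnk => hinner n k hnk ▸ summable_mul_alternating_coeff hq0 hlam hxq (k - n) k,
    hbound, fun hhalf n => ?_⟩
  have hratio : q / (1 - q) < 1 := by rw [div_lt_one (by linarith)]; linarith
  have hlim := (tendsto_factorial_div_factorial_mul_pow n l (by positivity) hratio).mul_const
    (1 / (1 - q) ^ (l + 1))
  rw [zero_mul] at hlim
  refine squeeze_zero_norm' ((eventually_ge_atTop n).mono fun k hnk => ?_) hlim
  exact (hbound n k hnk).trans_eq (mul_right_comm _ _ _)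
end
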